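/- arXiv:2602.04836 — 2 statements merged into one kernel-verified Lean document; each statement's English description precedes it below -/
import Mathlib

section
/- Let σ be the logistic sigmoid, α ≥ 2 real, k ≥ 1 an integer, and j ∈ {0,1,...,k-1}. If x ∈ [jα, (j+1)α], then ∏_{i=1}^k σ(x - iα) ≥ (1/20)·exp(-(α/2)·(k-j+1)(k-j)). -/
/-!
Write `σ t = exp t * σ (-t)`. For `i ≤ j` the argument `x - iα` is at least `2 (j - i)`, while
for `i = j + d + 1` it lies in `[-(d + 1) α, -2d]`. Hence both blocks of factors are bounded below
by products `∏_{d < m} σ (2d)`, the second one times `∏_{d < n} exp (-(d + 1) α)`, which is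
`exp (-α n (n + 1) / 2)`. Since `1 / σ (2d) = 1 + exp (-2) ^ d`, each such product is at least
`exp (-∑ exp (-2) ^ d) ≥ exp (-5/4)`, and `exp (-5/2) ≥ 1/20`.
-/

open Finset Real

lemma exp_div_one_add_exp_eq_sigmoid (t : ℝ) : exp t / (1 + exp t) = sigmoid t := by
  rw [sigmoid_def, exp_neg]
  field_simp
  ring

lemma sigmoid_eq_exp_mul_sigmoid_neg (t : ℝ) : sigmoid t = exp t * sigmoid (-t) := by
  simpa [mul_comm] using (sigmoid_mul_rexp_neg (-t)).symm

lemma inv_sigmoid_mul_natCast (c : ℝ) (d : ℕ) : (sigmoid (c * d))⁻¹ = 1 + exp (-c) ^ d := by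
  rw [sigmoid_def, inv_inv, ← exp_nat_mul]
  ring_nf

lemma exp_neg_inv_one_sub_le_prod_sigmoid {c : ℝ} (hc : 0 < c) (m : ℕ) :
    exp (-(1 - exp (-c))⁻¹) ≤ ∏ d ∈ range m, sigmoid (c * d) := by
  have hq : exp (-c) < 1 := exp_lt_one_iff.2 (neg_lt_zero.2 hc)
  have hinv : ∏ d ∈ range m, (sigmoid (c * d))⁻¹ ≤ exp ((1 - exp (-c))⁻¹) :=
    calc ∏ d ∈ range m, (sigmoid (c * d))⁻¹ = ∏ d ∈ range m, (1 + exp (-c) ^ d) := by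
          simp only [inv_sigmoid_mul_natCast]
      _ ≤ exp (∑ d ∈ range m, exp (-c) ^ d) :=
          Real.prod_one_add_le_exp_sum _ fun _ ↦ by positivity
      _ ≤ exp ((1 - exp (-c))⁻¹) := exp_le_exp.2 <| by
          simpa [← range_eq_Ico] using
            geom_sum_Ico_le_of_lt_one (m := 0) (n := m) (exp_pos _).le hq
  rw [Finset.prod_inv_distrib] at hinv
  rw [exp_neg, ← inv_inv (∏ d ∈ range m, sigmoid (c * d))]
  exact inv_anti₀ (inv_pos.2 (prod_pos fun _ _ ↦ sigmoid_pos _)) hinv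

lemma exp_neg_five_quarters_le_prod_sigmoid (m : ℕ) :
    exp (-(5 / 4)) ≤ ∏ d ∈ range m, sigmoid (2 * d) := by
  refine le_trans (exp_le_exp.2 ?_) (exp_neg_inv_one_sub_le_prod_sigmoid two_pos m)
  have h5 : 5 ≤ exp 2 := by linarith [quadratic_le_exp_of_nonneg (zero_le_two (α := ℝ))]
  have hq : exp (-2) ≤ 1 / 5 := by
    rw [exp_neg]; exact inv_le_of_inv_le₀ (by norm_num) (by simpa using h5)
  rw [neg_le_neg_iff, inv_le_comm₀ (by linarith) (by norm_num)]
  linarith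

lemma exp_five_halves_le_twenty : exp (5 / 2) ≤ 20 := by
  have h : exp (5 / 2) ^ 2 < 20 ^ 2 :=
    calc exp (5 / 2) ^ 2 = exp 1 ^ 5 := by
          rw [← exp_nat_mul, ← exp_nat_mul]; norm_num
      _ < 3 ^ 5 := by gcongr; exact exp_one_lt_three
      _ < 20 ^ 2 := by norm_num
  exact (pow_lt_pow_iff_left₀ (exp_pos _).le (by norm_num) two_ne_zero).1 h |>.le

lemma sum_range_natCast_add_one (n : ℕ) :
    ∑ d ∈ range n, ((d : ℝ) + 1) = (n + 1) * n / 2 := by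
  induction n with
  | zero => simp
  | succ n ih => rw [sum_range_succ, ih]; push_cast; ring

section Blocks

variable {x α : ℝ} {j : ℕ}

lemma exp_neg_five_quarters_le_prod_sigmoid_low_indices (hα : 2 ≤ α) (hx : j * α ≤ x) :
    exp (-(5 / 4)) ≤ ∏ i ∈ range j, sigmoid (x - (i + 1) * α) := by
  refine (exp_neg_five_quarters_le_prod_sigmoid j).trans_eq (prod_range_reflect _ j).symm
    |>.trans (prod_le_prod (fun _ _ ↦ (sigmoid_pos _).le) fun i hi ↦ sigmoid_le ?_)
  have hij : i + 1 ≤ j := mem_range.1 hi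
  have hgap : (0 : ℝ) ≤ j - 1 - i := by
    rw [sub_sub, sub_nonneg, add_comm]; exact_mod_cast hij
  rw [Nat.cast_sub (by omega), Nat.cast_sub (by omega)]
  push_cast
  nlinarith

lemma exp_mul_exp_le_prod_sigmoid_high_indices (hα : 2 ≤ α) (hx₁ : j * α ≤ x)
    (hx₂ : x ≤ (j + 1) * α) (n : ℕ) :
    exp (-(α / 2) * (n + 1) * n) * exp (-(5 / 4))
      ≤ ∏ d ∈ range n, sigmoid (x - (j + d + 1) * α) := by
  have hexp : exp (-(α / 2) * (n + 1) * n) = ∏ d ∈ range n, exp (-((d + 1) * α)) := by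
    rw [← exp_sum, sum_neg_distrib, ← sum_mul, sum_range_natCast_add_one]
    ring_nf
  rw [hexp]
  refine (mul_le_mul_of_nonneg_left (exp_neg_five_quarters_le_prod_sigmoid n)
    (prod_nonneg fun _ _ ↦ (exp_pos _).le)).trans ?_
  rw [← prod_mul_distrib]
  refine prod_le_prod (fun _ _ ↦ mul_nonneg (exp_pos _).le (sigmoid_pos _).le) fun d _ ↦ ?_
  rw [sigmoid_eq_exp_mul_sigmoid_neg (x - _)]
  have hd : (0 : ℝ) ≤ d := d.cast_nonneg
  exact mul_le_mul (exp_le_exp.2 (by nlinarith)) (sigmoid_le (by nlinarith)) (sigmoid_pos _).le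
    (exp_pos _).le

end Blocks

theorem stmt_4_general (x α : ℝ) (k j : ℕ) (hα : 2 ≤ α) (hj : j < k)
    (hx : x ∈ Set.Icc ((j : ℝ) * α) (((j : ℝ) + 1) * α)) :
    (1 / 20) * Real.exp (-(α / 2) * ((k : ℝ) - j + 1) * ((k : ℝ) - j))
      ≤ ∏ i ∈ Finset.Icc 1 k, Real.exp (x - i * α) / (1 + Real.exp (x - i * α)) := by
  obtain ⟨n, rfl⟩ := Nat.exists_eq_add_of_le hj.le
  obtain ⟨hx₁, hx₂⟩ := hx
  have hsplit : ∏ i ∈ Icc 1 (j + n), exp (x - i * α) / (1 + exp (x - i * α))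
      = (∏ i ∈ range j, sigmoid (x - (i + 1) * α)) *
        ∏ d ∈ range n, sigmoid (x - (j + d + 1) * α) := by
    rw [← Ico_add_one_right_eq_Icc, prod_Ico_eq_prod_range, Nat.add_sub_cancel, prod_range_add]
    push_cast
    simp only [exp_div_one_add_exp_eq_sigmoid]
    congr 1 <;> exact prod_congr rfl fun i _ ↦ congrArg sigmoid (by ring)
  have hconst : 1 / 20 ≤ exp (-(5 / 4)) * exp (-(5 / 4)) := by
    rw [← exp_add, show -(5 / 4) + -(5 / 4) = -(5 / 2 : ℝ) by norm_num, exp_neg, one_div]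
    exact inv_anti₀ (exp_pos _) exp_five_halves_le_twenty
  rw [hsplit, Nat.cast_add, add_sub_cancel_left]
  calc 1 / 20 * exp (-(α / 2) * (n + 1) * n)
      ≤ exp (-(5 / 4)) * (exp (-(α / 2) * (n + 1) * n) * exp (-(5 / 4))) := by
        nlinarith [exp_pos (-(α / 2) * (n + 1) * n)]
    _ ≤ _ := mul_le_mul (exp_neg_five_quarters_le_prod_sigmoid_low_indices hα hx₁)
        (exp_mul_exp_le_prod_sigmoid_high_indices hα hx₁ hx₂ n) (by positivity)
        (prod_nonneg fun _ _ ↦ (sigmoid_pos _).le)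

theorem stmt_4 (x α : ℝ) (k j : ℕ) (hk : 1 ≤ k) (hα : 2 ≤ α) (hj : j < k)
    (hx : x ∈ Set.Icc ((j : ℝ) * α) (((j : ℝ) + 1) * α)) :
    (1 / 20) * Real.exp (-(α / 2) * ((k : ℝ) - j + 1) * ((k : ℝ) - j))
      ≤ ∏ i ∈ Finset.Icc 1 k, Real.exp (x - i * α) / (1 + Real.exp (x - i * α)) :=
  stmt_4_general x α k j hα hj hx
end

section
/- For any real α ≥ 2 and any integer j ≥ 0, if x ∈ [jα, (j+1)α], then ∏_{i=1}^j σ(x - iα) ≥ 1 - (1/2)·∑_{h=0}^∞ e^{-hα} ≥ 1/4, where σ is the logistic sigmoid. -/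
/-!
Substituting `m = j - i`, the `i`-th factor is `σ (x - i α) ≥ σ (m α)` because `x ≥ j α`, so for
`j ≥ 1` the product is at least `∏_{m < j} σ (m α) = ½ ∏_{1 ≤ m < j} σ (m α)`. Since
`σ t ≥ 1 - e^{-t}`, the Weierstrass product inequality bounds this below by
`½ (1 - ∑_{m ≥ 1} e^{-m α}) = 1 - ½ ∑_{m ≥ 0} e^{-m α}`. The series is geometric with ratio
`e^{-α} ≤ 1/3`, so it sums to at most `3/2`.
-/

open Real Finset

theorem Finset.one_sub_sum_le_prod_one_sub {ι R : Type*} [CommRing R] [PartialOrder R]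
    [IsOrderedRing R] (s : Finset ι) {f : ι → R} (h0 : ∀ i ∈ s, 0 ≤ f i)
    (h1 : ∀ i ∈ s, f i ≤ 1) :
    1 - ∑ i ∈ s, f i ≤ ∏ i ∈ s, (1 - f i) := by
  induction s using Finset.cons_induction with
  | empty => simp
  | cons a s ha ih =>
    rw [prod_cons, sum_cons]
    have hfa0 := h0 a (mem_cons_self a s)
    have hfa1 := h1 a (mem_cons_self a s)
    have ih := ih (fun i hi => h0 i (mem_cons_of_mem hi)) (fun i hi => h1 i (mem_cons_of_mem hi))
    have hS : 0 ≤ ∑ i ∈ s, f i := sum_nonneg fun i hi => h0 i (mem_cons_of_mem hi)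
    calc 1 - (f a + ∑ i ∈ s, f i) ≤ (1 - f a) * (1 - ∑ i ∈ s, f i) := by
          linear_combination mul_nonneg hfa0 hS
      _ ≤ (1 - f a) * ∏ i ∈ s, (1 - f i) := mul_le_mul_of_nonneg_left ih (sub_nonneg.2 hfa1)

namespace Real

lemma exp_div_one_add_exp (t : ℝ) : exp t / (1 + exp t) = sigmoid t := by
  rw [sigmoid_def, exp_neg]
  field_simp
  ring

lemma one_sub_exp_neg_le_sigmoid (t : ℝ) : 1 - exp (-t) ≤ sigmoid t := by
  rw [sigmoid_def, ← one_div, le_div_iff₀ (by positivity)]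
  nlinarith [sq_nonneg (exp (-t))]

lemma exp_neg_nat_mul (m : ℕ) (α : ℝ) : exp (-(m : ℝ) * α) = exp (-α) ^ m := by
  rw [← exp_nat_mul]
  ring_nf

lemma hasSum_exp_neg_nat_mul {α : ℝ} (hα : 0 < α) :
    HasSum (fun m : ℕ => exp (-(m : ℝ) * α)) (1 - exp (-α))⁻¹ := by
  simp_rw [exp_neg_nat_mul]
  exact hasSum_geometric_of_lt_one (exp_pos _).le (exp_lt_one_iff.2 (neg_neg_of_pos hα))

lemma exp_neg_le_one_third {α : ℝ} (hα : 2 ≤ α) : exp (-α) ≤ 1 / 3 := by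
  have h3 : 3 ≤ exp 2 := by linarith [add_one_le_exp (2 : ℝ)]
  calc exp (-α) ≤ exp (-2) := exp_le_exp.2 (neg_le_neg hα)
    _ = (exp 2)⁻¹ := exp_neg 2
    _ ≤ 1 / 3 := by rw [one_div]; exact inv_anti₀ (by norm_num) h3

lemma one_sub_half_tsum_le_prod_sigmoid_nat_mul {α : ℝ} (hα : 0 < α) (n : ℕ) :
    1 - (1 / 2) * ∑' m : ℕ, exp (-(m : ℝ) * α) ≤ ∏ m ∈ range n, sigmoid (m * α) := by
  set f : ℕ → ℝ := fun m => exp (-(m : ℝ) * α) with hf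
  have hsum : Summable f := (hasSum_exp_neg_nat_mul hα).summable
  have hf0 (m : ℕ) : 0 ≤ f m := (exp_pos _).le
  have hf1 (m : ℕ) : f m ≤ 1 := exp_le_one_iff.2 (by nlinarith [m.cast_nonneg (α := ℝ)])
  cases n with
  | zero => simpa using tsum_nonneg hf0
  | succ k =>
    calc 1 - (1 / 2) * ∑' m, f m = (1 / 2) * (1 - ∑' m, f (m + 1)) := by
          rw [hsum.tsum_eq_zero_add, show f 0 = 1 by simp [hf]]; ring
      _ ≤ (1 / 2) * (1 - ∑ m ∈ range k, f (m + 1)) := by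
          gcongr
          exact ((summable_nat_add_iff 1).2 hsum).sum_le_tsum _ fun m _ => hf0 _
      _ ≤ (1 / 2) * ∏ m ∈ range k, (1 - f (m + 1)) := by
          gcongr
          exact one_sub_sum_le_prod_one_sub _ (fun m _ => hf0 _) fun m _ => hf1 _
      _ ≤ (1 / 2) * ∏ m ∈ range k, sigmoid ((m + 1 : ℕ) * α) := by
          gcongr with m
          · exact fun m _ => sub_nonneg.2 (hf1 _)
          · simpa [hf, neg_mul] using one_sub_exp_neg_le_sigmoid ((m + 1 : ℕ) * α)
      _ = ∏ m ∈ range (k + 1), sigmoid (m * α) := by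
          rw [prod_range_succ', Nat.cast_zero, zero_mul, sigmoid_zero]; ring

lemma prod_sigmoid_nat_mul_le_prod_sigmoid_sub {x α : ℝ} {j : ℕ} (hx : j * α ≤ x) :
    ∏ m ∈ range j, sigmoid (m * α) ≤ ∏ i ∈ Icc 1 j, sigmoid (x - i * α) := by
  calc ∏ m ∈ range j, sigmoid (m * α) = ∏ i ∈ Icc 1 j, sigmoid ((j - i : ℕ) * α) :=
        prod_nbij' (fun m => j - m) (fun i => j - i)
          (by intro m hm; simp only [mem_range, mem_Icc] at hm ⊢; omega)
          (by intro i hi; simp only [mem_range, mem_Icc] at hi ⊢; omega)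
          (by intro m hm; simp only [mem_range] at hm; omega)
          (by intro i hi; simp only [mem_Icc] at hi; omega)
          (by intro m hm; simp only [mem_range] at hm; congr; omega)
    _ ≤ ∏ i ∈ Icc 1 j, sigmoid (x - i * α) :=
        prod_le_prod (fun _ _ => sigmoid_nonneg _) fun i hi => sigmoid_le (by
          rw [Nat.cast_sub (mem_Icc.1 hi).2]; linarith)

end Real

theorem stmt_5 (x α : ℝ) (j : ℕ) (hα : 2 ≤ α)
    (hx : x ∈ Set.Icc ((j : ℝ) * α) (((j : ℝ) + 1) * α)) :
    1 - (1 / 2) * (∑' h : ℕ, Real.exp (-(h : ℝ) * α))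
      ≤ (∏ i ∈ Finset.Icc 1 j, Real.exp (x - i * α) / (1 + Real.exp (x - i * α)))
    ∧ (1 / 4 : ℝ) ≤ 1 - (1 / 2) * (∑' h : ℕ, Real.exp (-(h : ℝ) * α)) := by
  have hα0 : 0 < α := by linarith
  simp_rw [exp_div_one_add_exp]
  refine ⟨(one_sub_half_tsum_le_prod_sigmoid_nat_mul hα0 j).trans
    (prod_sigmoid_nat_mul_le_prod_sigmoid_sub hx.1), ?_⟩
  have hq := exp_neg_le_one_third hα
  have hinv : (1 - exp (-α))⁻¹ ≤ 3 / 2 := by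
    rw [inv_le_comm₀ (by linarith) (by norm_num)]; linarith
  rw [(hasSum_exp_neg_nat_mul hα0).tsum_eq]
  linarith
end
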